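/- The matrix X₁ is invertible and every eigenvalue λ ∈ ℂ of W₁ = X₁⁻¹Y₁ satisfies Re λ > 0. -/

import Mathlib

/-- The `(N-1)×(N-1)` tridiagonal complex matrix with 1-indexed subdiagonal entries
`sub_{i+1}` (at position `(i+1, i)`), diagonal entries `dia_i` and superdiagonal
entries `sup_i` (at position `(i, i+1)`), built from real data. -/
def triMatC (n : ℕ) (sub dia sup : ℕ → ℝ) : Matrix (Fin n) (Fin n) ℂ :=
  Matrix.of fun i j =>
    if i.val = j.val then (dia (i.val + 1) : ℂ)
    else if i.val + 1 = j.val then (sup (i.val + 1) : ℂ)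
    else if j.val + 1 = i.val then (sub (i.val + 1) : ℂ)
    else 0

/-- `μ` is an eigenvalue of the square complex matrix `M` if `M v = μ v` for some
nonzero vector `v`. -/
def IsEig {n : ℕ} (M : Matrix (Fin n) (Fin n) ℂ) (μ : ℂ) : Prop :=
  ∃ v : Fin n → ℂ, v ≠ 0 ∧ M.mulVec v = μ • v

/-- `c₁ = (2 + δz)/(24 δv)`. -/
noncomputable def cc1 (δv δz : ℝ) : ℝ := (2 + δz) / (24 * δv)

/-- `c₂ = 5/(6 δv)`. -/
noncomputable def cc2 (δv : ℝ) : ℝ := 5 / (6 * δv)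

/-- `c₃ = (2 - δz)/(24 δv)`. -/
noncomputable def cc3 (δv δz : ℝ) : ℝ := (2 - δz) / (24 * δv)

/-- `y₁ = -c/(2δz) - (c + c δz²/12)/δz²`. -/
noncomputable def yy1 (c δz : ℝ) : ℝ := -c / (2 * δz) - (c + c * δz ^ 2 / 12) / δz ^ 2

/-- `y₂ = 2 (c + c δz²/12)/δz²`. -/
noncomputable def yy2 (c δz : ℝ) : ℝ := 2 * (c + c * δz ^ 2 / 12) / δz ^ 2

/-- `y₃ = c/(2δz) - (c + c δz²/12)/δz²`. -/
noncomputable def yy3 (c δz : ℝ) : ℝ := c / (2 * δz) - (c + c * δz ^ 2 / 12) / δz ^ 2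

/-- The `(N-1)×(N-1)` tridiagonal Toeplitz matrix `X₁` with subdiagonal `c₁`,
diagonal `c₂` and superdiagonal `c₃`. -/
noncomputable def X1mat (δv δz : ℝ) (N : ℕ) : Matrix (Fin (N - 1)) (Fin (N - 1)) ℂ :=
  triMatC (N - 1) (fun _ => cc1 δv δz) (fun _ => cc2 δv) (fun _ => cc3 δv δz)

/-- The `(N-1)×(N-1)` tridiagonal Toeplitz matrix `Y₁` with subdiagonal `y₁`,
diagonal `y₂` and superdiagonal `y₃`. -/
noncomputable def Y1mat (c δz : ℝ) (N : ℕ) : Matrix (Fin (N - 1)) (Fin (N - 1)) ℂ :=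
  triMatC (N - 1) (fun _ => yy1 c δz) (fun _ => yy2 c δz) (fun _ => yy3 c δz)

/-!
Let `U` be the matrix with ones on the superdiagonal. A tridiagonal Toeplitz matrix with real
entries `(a, b, d)` is `b + d U + a Uᴴ`, so its quadratic form is `b ‖x‖² + d S + a S̄` with
`S = ⟪x, U x⟫`. As `U` is a contraction with no nonzero fixed vector, `|S| ≤ ‖x‖²` and
`Re S < ‖x‖²` for `x ≠ 0`. Writing `n = ‖x‖²` and `S = R + iI`, this gives
`Re ⟪x, X₁ x⟫ = (5n + R)/(6δv) > 0`, so `X₁` is invertible. If `X₁⁻¹ Y₁ x = λ x` then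
`⟪x, Y₁ x⟫ = λ ⟪x, X₁ x⟫`, and `Re λ` has the sign of
`Re (⟪x, Y₁ x⟫ · conj ⟪x, X₁ x⟫) = (y₂ (n - R)(10n + 2R) - c I²)/(12δv)`,
which is positive because `y₂ > c/6` and `I² ≤ (n - R)(n + R)`.
-/

open Matrix WithLp ComplexConjugate
open scoped InnerProductSpace

section Contraction

variable {𝕜 E : Type*} [RCLike 𝕜] [NormedAddCommGroup E] [InnerProductSpace 𝕜 E]
  {T : E →ₗ[𝕜] E}

lemma norm_inner_map_self_le_norm_sq (hT : ∀ x, ‖T x‖ ≤ ‖x‖) (x : E) : ‖⟪x, T x⟫_𝕜‖ ≤ ‖x‖ ^ 2 :=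
  calc ‖⟪x, T x⟫_𝕜‖ ≤ ‖x‖ * ‖T x‖ := norm_inner_le_norm x (T x)
    _ ≤ ‖x‖ * ‖x‖ := by gcongr; exact hT x
    _ = ‖x‖ ^ 2 := (sq ‖x‖).symm

lemma re_inner_map_self_lt_norm_sq (hT : ∀ x, ‖T x‖ ≤ ‖x‖) (hfix : ∀ x, T x = x → x = 0) {x : E}
    (hx : x ≠ 0) : RCLike.re ⟪x, T x⟫_𝕜 < ‖x‖ ^ 2 := by
  by_contra! h
  refine hx (hfix x ?_)
  have : ‖x - T x‖ ^ 2 ≤ 0 := by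
    rw [@norm_sub_sq 𝕜]
    nlinarith [hT x, norm_nonneg (T x)]
  exact (sub_eq_zero.1 (norm_eq_zero.1 (by nlinarith [norm_nonneg (x - T x)]))).symm

end Contraction

def upperShift (𝕜 : Type*) [Zero 𝕜] [One 𝕜] (m : ℕ) : Matrix (Fin m) (Fin m) 𝕜 :=
  of fun i j => if (i : ℕ) + 1 = j then 1 else 0

lemma upperShift_mulVec_apply {R : Type*} [NonAssocSemiring R] {m : ℕ} (v : Fin m → R)
    (i : Fin m) : (upperShift R m *ᵥ v) i = if h : (i : ℕ) + 1 < m then v ⟨i + 1, h⟩ else 0 := by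
  simp only [mulVec, dotProduct, upperShift, of_apply, ite_mul, one_mul, zero_mul]
  split_ifs with h
  · have hj (j : Fin m) : (i : ℕ) + 1 = j ↔ (⟨i + 1, h⟩ : Fin m) = j := by simp [Fin.ext_iff]
    simp only [hj, Finset.sum_ite_eq, Finset.mem_univ, if_true]
  · exact Finset.sum_eq_zero fun j _ => if_neg (by omega)

section upperShift

variable {𝕜 : Type*} [RCLike 𝕜] {m : ℕ}

lemma norm_toEuclideanLin_upperShift_le (x : EuclideanSpace 𝕜 (Fin m)) :
    ‖toEuclideanLin (upperShift 𝕜 m) x‖ ≤ ‖x‖ := by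
  refine sq_le_sq₀ (norm_nonneg _) (norm_nonneg _) |>.1 ?_
  rw [EuclideanSpace.norm_sq_eq, EuclideanSpace.norm_sq_eq]
  simp only [ofLp_toLpLin, toLin'_apply, upperShift_mulVec_apply]
  cases m with
  | zero => simp
  | succ k =>
    rw [Fin.sum_univ_castSucc, Fin.sum_univ_succ]
    simp [Fin.succ]

lemma eq_zero_of_toEuclideanLin_upperShift_eq_self {x : EuclideanSpace 𝕜 (Fin m)}
    (hx : toEuclideanLin (upperShift 𝕜 m) x = x) : x = 0 := by
  have hx' (i : Fin m) : x i = if h : (i : ℕ) + 1 < m then x ⟨i + 1, h⟩ else 0 := by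
    rw [← upperShift_mulVec_apply]
    exact congrArg (fun y : EuclideanSpace 𝕜 (Fin m) => ofLp y i) hx.symm
  have hvanish (k : ℕ) : ∀ i : Fin m, m ≤ i + k + 1 → x i = 0 := by
    induction k with
    | zero => intro i hi; rw [hx', dif_neg (by omega)]
    | succ k ih =>
      intro i hi
      rw [hx']
      split_ifs with h
      · exact ih _ (by simp; omega)
      · rfl
  ext i
  exact hvanish m i (by omega)

end upperShift

lemma triMatC_const (m : ℕ) (a b d : ℝ) :
    triMatC m (fun _ => a) (fun _ => b) (fun _ => d)
      = (b : ℂ) • 1 + (d : ℂ) • upperShift ℂ m + (a : ℂ) • (upperShift ℂ m)ᴴ := by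
  ext i j
  simp only [triMatC, upperShift, of_apply, Matrix.add_apply, Matrix.smul_apply, one_apply,
    conjTranspose_apply, Fin.ext_iff]
  split_ifs <;> first | omega | simp_all

lemma inner_toEuclideanLin_triMatC_const {m : ℕ} (a b d : ℝ) (x : EuclideanSpace ℂ (Fin m)) :
    ⟪x, toEuclideanLin (triMatC m (fun _ => a) (fun _ => b) (fun _ => d)) x⟫_ℂ
      = b * ‖x‖ ^ 2 + d * ⟪x, toEuclideanLin (upperShift ℂ m) x⟫_ℂ
        + a * conj ⟪x, toEuclideanLin (upperShift ℂ m) x⟫_ℂ := by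
  rw [triMatC_const, map_add, map_add, map_smul, map_smul, map_smul,
    toEuclideanLin_conjTranspose_eq_adjoint]
  simp only [LinearMap.add_apply, LinearMap.smul_apply, inner_add_right, inner_smul_right,
    LinearMap.adjoint_inner_right, inner_conj_symm, toLpLin_one, LinearMap.id_apply,
    inner_self_eq_norm_sq_to_K]
  rw [RCLike.ofReal_eq_complex_ofReal]

lemma re_inner_toEuclideanLin_triMatC_const {m : ℕ} (a b d : ℝ) (x : EuclideanSpace ℂ (Fin m)) :
    (⟪x, toEuclideanLin (triMatC m (fun _ => a) (fun _ => b) (fun _ => d)) x⟫_ℂ).re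
      = b * ‖x‖ ^ 2 + (a + d) * (⟪x, toEuclideanLin (upperShift ℂ m) x⟫_ℂ).re := by
  rw [inner_toEuclideanLin_triMatC_const]
  simp only [Complex.add_re, Complex.mul_re, Complex.ofReal_re, Complex.ofReal_im, Complex.conj_re,
    Complex.conj_im]
  norm_cast
  ring

lemma im_inner_toEuclideanLin_triMatC_const {m : ℕ} (a b d : ℝ) (x : EuclideanSpace ℂ (Fin m)) :
    (⟪x, toEuclideanLin (triMatC m (fun _ => a) (fun _ => b) (fun _ => d)) x⟫_ℂ).im
      = (d - a) * (⟪x, toEuclideanLin (upperShift ℂ m) x⟫_ℂ).im := by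
  rw [inner_toEuclideanLin_triMatC_const]
  simp only [Complex.add_im, Complex.mul_im, Complex.ofReal_re, Complex.ofReal_im, Complex.conj_re,
    Complex.conj_im]
  norm_cast
  ring

lemma mul_sq_lt_of_sq_add_sq_le {c y n R I : ℝ} (hc : 0 < c) (hy : c / 6 < y) (hRn : R < n)
    (hRI : R ^ 2 + I ^ 2 ≤ n ^ 2) : c * I ^ 2 < y * (n - R) * (10 * n + 2 * R) := by
  have hnR : 0 ≤ n + R := by nlinarith
  have hI : I ^ 2 ≤ (n - R) * (n + R) := by nlinarith
  have hpos : 0 < (n - R) * (10 * n + 2 * R) := by nlinarith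
  calc c * I ^ 2 ≤ c * ((n - R) * (n + R)) := by gcongr
    _ ≤ c / 6 * ((n - R) * (10 * n + 2 * R)) := by nlinarith [mul_nonneg hc.le (sq_nonneg (n - R))]
    _ < y * (n - R) * (10 * n + 2 * R) := by nlinarith

section X1Y1

variable {δv δz : ℝ} {N : ℕ} (x : EuclideanSpace ℂ (Fin (N - 1)))

lemma re_inner_X1mat : (⟪x, toEuclideanLin (X1mat δv δz N) x⟫_ℂ).re
    = (5 * ‖x‖ ^ 2 + (⟪x, toEuclideanLin (upperShift ℂ (N - 1)) x⟫_ℂ).re) / (6 * δv) := by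
  rw [X1mat, re_inner_toEuclideanLin_triMatC_const, cc1, cc2, cc3]
  ring

lemma im_inner_X1mat : (⟪x, toEuclideanLin (X1mat δv δz N) x⟫_ℂ).im
    = -δz / (12 * δv) * (⟪x, toEuclideanLin (upperShift ℂ (N - 1)) x⟫_ℂ).im := by
  rw [X1mat, im_inner_toEuclideanLin_triMatC_const, cc1, cc3]
  ring

lemma re_inner_Y1mat {c : ℝ} : (⟪x, toEuclideanLin (Y1mat c δz N) x⟫_ℂ).re
    = yy2 c δz * (‖x‖ ^ 2 - (⟪x, toEuclideanLin (upperShift ℂ (N - 1)) x⟫_ℂ).re) := by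
  rw [Y1mat, re_inner_toEuclideanLin_triMatC_const, yy1, yy2, yy3]
  ring

lemma im_inner_Y1mat {c : ℝ} : (⟪x, toEuclideanLin (Y1mat c δz N) x⟫_ℂ).im
    = c / δz * (⟪x, toEuclideanLin (upperShift ℂ (N - 1)) x⟫_ℂ).im := by
  rw [Y1mat, im_inner_toEuclideanLin_triMatC_const, yy1, yy3]
  ring

variable {x}

lemma re_inner_X1mat_pos (hδv : 0 < δv) (hx : x ≠ 0) :
    0 < (⟪x, toEuclideanLin (X1mat δv δz N) x⟫_ℂ).re := by
  have hS := (Complex.abs_re_le_norm _).trans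
    (norm_inner_map_self_le_norm_sq norm_toEuclideanLin_upperShift_le x)
  have hn : 0 < ‖x‖ := norm_pos_iff.2 hx
  have hR := abs_le.1 hS
  rw [re_inner_X1mat]
  exact div_pos (by nlinarith) (by positivity)

lemma re_inner_Y1mat_mul_conj_inner_X1mat_pos {c : ℝ} (hc : 0 < c) (hδv : 0 < δv)
    (hδz : 0 < δz) (hx : x ≠ 0) :
    0 < (⟪x, toEuclideanLin (Y1mat c δz N) x⟫_ℂ *
      conj ⟪x, toEuclideanLin (X1mat δv δz N) x⟫_ℂ).re := by
  set S := ⟪x, toEuclideanLin (upperShift ℂ (N - 1)) x⟫_ℂ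
  have hRn : S.re < ‖x‖ ^ 2 := re_inner_map_self_lt_norm_sq norm_toEuclideanLin_upperShift_le
    (fun _ => eq_zero_of_toEuclideanLin_upperShift_eq_self) hx
  have hRI : S.re ^ 2 + S.im ^ 2 ≤ (‖x‖ ^ 2) ^ 2 := by
    have hS := norm_inner_map_self_le_norm_sq norm_toEuclideanLin_upperShift_le x
    nlinarith [Complex.sq_norm_sub_sq_re S, norm_nonneg S]
  have hy : c / 6 < yy2 c δz := by
    rw [yy2]
    field_simp
    linarith
  have hnum := mul_sq_lt_of_sq_add_sq_le hc hy hRn hRI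
  rw [Complex.mul_re, Complex.conj_re, Complex.conj_im, re_inner_X1mat, im_inner_X1mat,
    re_inner_Y1mat, im_inner_Y1mat]
  calc 0 < (yy2 c δz * (‖x‖ ^ 2 - S.re) * (10 * ‖x‖ ^ 2 + 2 * S.re) - c * S.im ^ 2) / (12 * δv) :=
        div_pos (by linarith) (by positivity)
    _ = _ := by field_simp; ring

end X1Y1

section FieldOfValues

variable {m : ℕ} {X Y : Matrix (Fin m) (Fin m) ℂ}

lemma isUnit_det_of_re_inner_pos
    (hX : ∀ x : EuclideanSpace ℂ (Fin m), x ≠ 0 → 0 < (⟪x, toEuclideanLin X x⟫_ℂ).re) :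
    IsUnit X.det := by
  rw [isUnit_iff_ne_zero]
  intro h0
  obtain ⟨v, hv, hXv⟩ := exists_mulVec_eq_zero_iff.2 h0
  have := hX (toLp 2 v) (by simpa using hv)
  rw [toLpLin_toLp, toLin'_apply, hXv] at this
  simp at this

lemma re_pos_of_isEig_inv_mul (hX : IsUnit X.det)
    (hXY : ∀ x : EuclideanSpace ℂ (Fin m), x ≠ 0 →
      0 < (⟪x, toEuclideanLin Y x⟫_ℂ * conj ⟪x, toEuclideanLin X x⟫_ℂ).re)
    {μ : ℂ} (hμ : IsEig (X⁻¹ * Y) μ) : 0 < μ.re := by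
  obtain ⟨v, hv, hμv⟩ := hμ
  have hYv : Y *ᵥ v = μ • X *ᵥ v := by
    rw [← mulVec_smul, ← hμv, mulVec_mulVec, mul_nonsing_inv_cancel_left _ _ hX]
  have h := hXY (toLp 2 v) (by simpa using hv)
  rw [toLpLin_toLp, toLpLin_toLp, toLin'_apply, toLin'_apply, hYv, toLp_smul, inner_smul_right,
    mul_assoc, Complex.mul_conj, Complex.re_mul_ofReal] at h
  exact pos_of_mul_pos_left h (Complex.normSq_nonneg _)

end FieldOfValues

theorem stmt10_general (c δv δz : ℝ) (hc : 0 < c) (hδv : 0 < δv) (hδz0 : 0 < δz) (N : ℕ) :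
    IsUnit (X1mat δv δz N).det ∧
    ∀ lam : ℂ, IsEig ((X1mat δv δz N)⁻¹ * Y1mat c δz N) lam → 0 < lam.re := by
  have hX : IsUnit (X1mat δv δz N).det :=
    isUnit_det_of_re_inner_pos fun _ hx => re_inner_X1mat_pos hδv hx
  exact ⟨hX, fun _ => re_pos_of_isEig_inv_mul hX
    fun _ hx => re_inner_Y1mat_mul_conj_inner_X1mat_pos hc hδv hδz0 hx⟩

/-- `X₁` is invertible and every eigenvalue of `W₁ = X₁⁻¹ Y₁` has positive real part. -/
theorem stmt10 (c δv δz : ℝ) (hc : 0 < c) (hδv : 0 < δv) (hδz0 : 0 < δz)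
    (hδz2 : δz < 2) (N : ℕ) (hN : 2 ≤ N) :
    IsUnit (X1mat δv δz N).det ∧
    ∀ lam : ℂ, IsEig ((X1mat δv δz N)⁻¹ * Y1mat c δz N) lam → 0 < lam.re :=
  stmt10_general c δv δz hc hδv hδz0 N
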